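/- arXiv:1607.02005 — 5 statements merged into one kernel-verified Lean document; each statement's English description precedes it below -/
import Mathlib

section
/- (Uncertainty principle via the Stripe-Spark.) Let D be a convolutional dictionary. If Γ and Γ̂ are two distinct global vectors with DΓ = DΓ̂, then ‖Γ‖_{0,∞} + ‖Γ̂‖_{0,∞} ≥ σ_∞(D), where σ_∞(D) is the Stripe-Spark of D. -/
open Finset

noncomputable section

attribute [local instance] Classical.propDecidable

/-- The stripe index set `S i`: all column indices `(t, j)` whose shift position `t` lies in the
cyclic window `{i - n + 1, …, i + n - 1}` (mod `N`). -/
def stripeSet (N n m : ℕ) [NeZero N] (i : ZMod N) : Finset (ZMod N × Fin m) :=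
  Finset.univ.filter (fun a =>
    ∃ s ∈ Finset.Icc (-(n : ℤ) + 1) ((n : ℤ) - 1), a.1 = i + (s : ZMod N))

/-- The number of nonzero entries of `Γ` in the `i`-th stripe. -/
def stripeNnz (N n m : ℕ) [NeZero N] (Γ : ZMod N × Fin m → ℝ) (i : ZMod N) : ℕ :=
  ((stripeSet N n m i).filter (fun a => Γ a ≠ 0)).card

/-- The `ℓ_{0,∞}` norm of a global vector: the maximal number of nonzeros in a stripe. -/
def l0inf (N n m : ℕ) [NeZero N] (Γ : ZMod N × Fin m → ℝ) : ℕ :=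
  Finset.univ.sup (fun i : ZMod N => stripeNnz N n m Γ i)

/-- Inner product of two columns of `D`. -/
def colInner {N m : ℕ} [NeZero N] (D : Matrix (ZMod N) (ZMod N × Fin m) ℝ)
    (a b : ZMod N × Fin m) : ℝ :=
  ∑ t, D t a * D t b

/-- The mutual coherence `μ(D)`: the maximal absolute inner product between distinct columns. -/
def mutualCoherence {N m : ℕ} [NeZero N] (D : Matrix (ZMod N) (ZMod N × Fin m) ℝ) : ℝ :=
  sSup {x | ∃ a b : ZMod N × Fin m, a ≠ b ∧ x = |colInner D a b|}

/-- `D` is a convolutional dictionary: its columns are the cyclic shifts of the columns of a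
local dictionary `D_L ∈ ℝ^{n×m}`, and all columns have unit `ℓ2` norm. -/
def IsConvDict (N n m : ℕ) [NeZero N] (D : Matrix (ZMod N) (ZMod N × Fin m) ℝ) : Prop :=
  (∃ DL : Fin n → Fin m → ℝ, ∀ (i t : ZMod N) (j : Fin m),
      D t (i, j) = if h : (t - i).val < n then DL ⟨(t - i).val, h⟩ j else 0) ∧
  ∀ a : ZMod N × Fin m, ∑ t, (D t a) ^ 2 = 1

/-- The shifted mutual coherence `μ_s`: the maximal absolute inner product between a column at
shift position `i` and a column at shift position `i + s` (distinct columns when `s = 0`). -/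
def shiftedMu {N m : ℕ} [NeZero N] (D : Matrix (ZMod N) (ZMod N × Fin m) ℝ) (s : ℤ) : ℝ :=
  sSup {x | ∃ (i : ZMod N) (j l : Fin m), (s = 0 → j ≠ l) ∧
    x = |colInner D (i, j) (i + (s : ZMod N), l)|}

/-- `n_{i,s}(Γ)`: the number of nonzeros of `Γ` in the local chunk at shift `s` of the
`i`-th stripe. -/
def shiftNnz (N m : ℕ) [NeZero N] (Γ : ZMod N × Fin m → ℝ) (i : ZMod N) (s : ℤ) : ℕ :=
  (Finset.univ.filter (fun j : Fin m => Γ (i + (s : ZMod N), j) ≠ 0)).card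

/-- The stripe coherence `ζ_i(Γ) = Σ_s n_{i,s}(Γ) · μ_s`. -/
def stripeCoherence (N n m : ℕ) [NeZero N] (D : Matrix (ZMod N) (ZMod N × Fin m) ℝ)
    (Γ : ZMod N × Fin m → ℝ) (i : ZMod N) : ℝ :=
  ∑ s ∈ Finset.Icc (-(n : ℤ) + 1) ((n : ℤ) - 1), (shiftNnz N m Γ i s : ℝ) * shiftedMu D s

/-- The Stripe-Spark `σ_∞(D)`: the least `ℓ_{0,∞}` norm of a nonzero vector in the
null space of `D` (`⊤` if the null space is trivial). -/
def stripeSpark (N n m : ℕ) [NeZero N] (D : Matrix (ZMod N) (ZMod N × Fin m) ℝ) : ℕ∞ :=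
  sInf {k : ℕ∞ | ∃ Δ : ZMod N × Fin m → ℝ, Δ ≠ 0 ∧ D.mulVec Δ = 0 ∧ (l0inf N n m Δ : ℕ∞) = k}

/-- The `ℓ1` norm of a global vector. -/
def l1norm {N m : ℕ} [NeZero N] (Γ : ZMod N × Fin m → ℝ) : ℝ :=
  ∑ a, |Γ a|

/-- Uncertainty principle via the Stripe-Spark: two distinct representations of
the same signal have `ℓ_{0,∞}` norms summing to at least `σ_∞(D)`. -/
theorem uncertainty_stripeSpark (N n m : ℕ) [NeZero N]
    (hm : 1 ≤ m) (hn : 1 ≤ n) (hN : 2 * n - 1 ≤ N)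
    (D : Matrix (ZMod N) (ZMod N × Fin m) ℝ) (hD : IsConvDict N n m D)
    (Γ Γ' : ZMod N × Fin m → ℝ) (hne : Γ ≠ Γ')
    (heq : D.mulVec Γ = D.mulVec Γ') :
    stripeSpark N n m D ≤ ((l0inf N n m Γ + l0inf N n m Γ' : ℕ) : ℕ∞) := by
  set Δ : ZMod N × Fin m → ℝ := fun a => Γ a - Γ' a with hΔ
  have hΔne : Δ ≠ 0 := by
    intro h
    apply hne
    funext a
    have := congrFun h a
    simp [hΔ] at this
    linarith
  have hker : D.mulVec Δ = 0 := by
    have : Δ = Γ - Γ' := rfl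
    rw [this, Matrix.mulVec_sub, heq, sub_self]
  have hle : l0inf N n m Δ ≤ l0inf N n m Γ + l0inf N n m Γ' := by
    apply Finset.sup_le
    intro i _
    have hsub : (stripeSet N n m i).filter (fun a => Δ a ≠ 0) ⊆
        (stripeSet N n m i).filter (fun a => Γ a ≠ 0) ∪
        (stripeSet N n m i).filter (fun a => Γ' a ≠ 0) := by
      intro a ha
      simp only [Finset.mem_filter, Finset.mem_union] at ha ⊢
      rcases ha with ⟨hs, hne0⟩
      by_cases h1 : Γ a = 0
      · exact Or.inr ⟨hs, fun h2 => hne0 (by simp [hΔ, h1, h2])⟩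
      · exact Or.inl ⟨hs, h1⟩
    calc stripeNnz N n m Δ i ≤ _ := Finset.card_le_card hsub
      _ ≤ stripeNnz N n m Γ i + stripeNnz N n m Γ' i := Finset.card_union_le _ _
      _ ≤ l0inf N n m Γ + l0inf N n m Γ' :=
        Nat.add_le_add (Finset.le_sup (Finset.mem_univ i)) (Finset.le_sup (Finset.mem_univ i))
  calc stripeSpark N n m D ≤ ((l0inf N n m Δ : ℕ) : ℕ∞) :=
        sInf_le ⟨Δ, hΔne, hker, rfl⟩
    _ ≤ _ := by exact_mod_cast hle

end
end

section
/- (Uniqueness via the Stripe-Spark.) Let D be a convolutional dictionary and let Γ ∈ ℝ^{mN} satisfy ‖Γ‖_{0,∞} < σ_∞(D)/2, where σ_∞(D) is the Stripe-Spark of D. Then every Γ̂ ≠ Γ with DΓ̂ = DΓ satisfies ‖Γ̂‖_{0,∞} > ‖Γ‖_{0,∞}; that is, Γ is the unique minimizer of the ℓ_{0,∞} norm among all representations of the signal DΓ. -/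
open Finset

noncomputable section

attribute [local instance] Classical.propDecidable

/-- Uniqueness via the Stripe-Spark: if `‖Γ‖_{0,∞} < σ_∞(D)/2`, then every other
representation of the signal `DΓ` has a strictly larger `ℓ_{0,∞}` norm. -/
theorem uniqueness_stripeSpark (N n m : ℕ) [NeZero N]
    (hm : 1 ≤ m) (hn : 1 ≤ n) (hN : 2 * n - 1 ≤ N)
    (D : Matrix (ZMod N) (ZMod N × Fin m) ℝ) (hD : IsConvDict N n m D)
    (Γ : ZMod N × Fin m → ℝ)
    (hΓ : 2 * (l0inf N n m Γ : ℕ∞) < stripeSpark N n m D) :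
    ∀ Γ' : ZMod N × Fin m → ℝ, Γ' ≠ Γ → D.mulVec Γ' = D.mulVec Γ →
      l0inf N n m Γ < l0inf N n m Γ' := by
  intro Γ' hne heq
  set Δ : ZMod N × Fin m → ℝ := Γ' - Γ with hΔ
  have hΔne : Δ ≠ 0 := sub_ne_zero.mpr hne
  have hDΔ : D.mulVec Δ = 0 := by
    rw [hΔ, Matrix.mulVec_sub, heq, sub_self]
  have hspark : stripeSpark N n m D ≤ (l0inf N n m Δ : ℕ∞) :=
    sInf_le ⟨Δ, hΔne, hDΔ, rfl⟩
  have hsub : l0inf N n m Δ ≤ l0inf N n m Γ' + l0inf N n m Γ := by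
    apply Finset.sup_le
    intro i _
    calc stripeNnz N n m Δ i ≤ stripeNnz N n m Γ' i + stripeNnz N n m Γ i := by
          unfold stripeNnz
          refine le_trans (le_trans (Finset.card_le_card ?_)
            (Finset.card_union_le _ _)) le_rfl
          intro a ha
          simp only [Finset.mem_filter, Finset.mem_union] at *
          rcases ha with ⟨hS, hne0⟩
          by_cases h1 : Γ' a = 0
          · refine Or.inr ⟨hS, fun h2 => hne0 ?_⟩
            show (Γ' - Γ) a = 0; simp [h1, h2]
          · exact Or.inl ⟨hS, h1⟩
      _ ≤ _ := add_le_add (Finset.le_sup (Finset.mem_univ i))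
            (Finset.le_sup (Finset.mem_univ i))
  have h2 : 2 * (l0inf N n m Γ : ℕ∞) < (l0inf N n m Γ' : ℕ∞) + (l0inf N n m Γ : ℕ∞) :=
    lt_of_lt_of_le hΓ (le_trans hspark (by exact_mod_cast hsub))
  have h3 : 2 * l0inf N n m Γ < l0inf N n m Γ' + l0inf N n m Γ := by exact_mod_cast h2
  omega

end
end

section
/- (Gershgorin bound for convolutional Gram matrices.) Let D be a convolutional dictionary with mutual coherence μ(D), and let 𝒯 be a nonempty set of column indices whose ℓ_{0,∞} norm equals k, i.e. max_{i∈ℤ/Nℤ} |𝒯 ∩ S_i| = k. Let D_𝒯 be the submatrix of D consisting of the columns indexed by 𝒯 and G^𝒯 = D_𝒯ᵀ D_𝒯 its Gram matrix. Then every eigenvalue λ of G^𝒯 satisfies 1 − (k−1)·μ(D) ≤ λ ≤ 1 + (k−1)·μ(D). -/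
open Finset

noncomputable section

attribute [local instance] Classical.propDecidable

/-! Gershgorin's circle theorem places every eigenvalue of the Gram matrix `G = D_Tᵀ D_T` within
`∑_{b ≠ a} |G a b|` of some diagonal entry `G a a = 1`. In a convolutional dictionary the column
`a` is orthogonal to every column outside the stripe of its shift position, so only the at most
`k - 1` other indices of `T` in that stripe contribute, each by at most `μ(D)`. -/

section Coherence

variable {N m : ℕ} [NeZero N] {D : Matrix (ZMod N) (ZMod N × Fin m) ℝ}

theorem colInner_self (hD : ∀ a, ∑ t, D t a ^ 2 = 1) (a : ZMod N × Fin m) :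
    colInner D a a = 1 := by
  simpa only [colInner, sq] using hD a

theorem abs_colInner_le_one (hD : ∀ a, ∑ t, D t a ^ 2 = 1) (a b : ZMod N × Fin m) :
    |colInner D a b| ≤ 1 := by
  rw [← sq_le_one_iff_abs_le_one]
  calc colInner D a b ^ 2 ≤ (∑ t, D t a ^ 2) * ∑ t, D t b ^ 2 :=
        Finset.sum_mul_sq_le_sq_mul_sq _ _ _
    _ = 1 := by rw [hD, hD, one_mul]

theorem mutualCoherence_nonneg : 0 ≤ mutualCoherence D :=
  Real.sSup_nonneg fun _ ⟨_, _, _, hx⟩ => hx ▸ abs_nonneg _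

theorem abs_colInner_le_mutualCoherence (hD : ∀ a, ∑ t, D t a ^ 2 = 1)
    {a b : ZMod N × Fin m} (hab : a ≠ b) : |colInner D a b| ≤ mutualCoherence D :=
  le_csSup ⟨1, fun _ ⟨a, b, _, hx⟩ => hx ▸ abs_colInner_le_one hD a b⟩ ⟨a, b, hab, rfl⟩

end Coherence

section Stripe

variable {N n m : ℕ} [NeZero N]

theorem mem_stripeSet_self (hn : 1 ≤ n) (a : ZMod N × Fin m) : a ∈ stripeSet N n m a.1 := by
  simp only [stripeSet, Finset.mem_filter, Finset.mem_univ, true_and, Finset.mem_Icc]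
  exact ⟨0, ⟨by omega, by omega⟩, by simp⟩

theorem mem_stripeSet_of_val_sub_lt {i i' t : ZMod N} (j : Fin m) (hi : (t - i).val < n)
    (hi' : (t - i').val < n) : (i', j) ∈ stripeSet N n m i := by
  simp only [stripeSet, Finset.mem_filter, Finset.mem_univ, true_and, Finset.mem_Icc]
  refine ⟨(t - i).val - (t - i').val, ⟨by omega, by omega⟩, ?_⟩
  push_cast [ZMod.natCast_val, ZMod.cast_id']
  ring

theorem IsConvDict.apply_eq_zero_of_le_val_sub {D : Matrix (ZMod N) (ZMod N × Fin m) ℝ}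
    (hD : IsConvDict N n m D) {t i : ZMod N} (j : Fin m) (h : n ≤ (t - i).val) :
    D t (i, j) = 0 := by
  obtain ⟨⟨DL, hDL⟩, -⟩ := hD
  rw [hDL, dif_neg h.not_gt]

theorem IsConvDict.colInner_eq_zero_of_notMem_stripeSet
    {D : Matrix (ZMod N) (ZMod N × Fin m) ℝ} (hD : IsConvDict N n m D)
    {a b : ZMod N × Fin m} (hb : b ∉ stripeSet N n m a.1) : colInner D a b = 0 := by
  refine Finset.sum_eq_zero fun t _ => ?_
  by_cases ha : (t - a.1).val < n
  · have hb' : n ≤ (t - b.1).val := not_lt.mp fun h => hb (mem_stripeSet_of_val_sub_lt b.2 ha h)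
    rw [hD.apply_eq_zero_of_le_val_sub b.2 hb', mul_zero]
  · rw [hD.apply_eq_zero_of_le_val_sub a.2 (not_lt.mp ha), zero_mul]

end Stripe

theorem sum_abs_erase_le_of_eq_zero_of_notMem {ι : Type*} [DecidableEq ι] {T S : Finset ι}
    {a : ι} (ha : a ∈ T ∩ S) {f : ι → ℝ} {μ : ℝ} (hS : ∀ b ∉ S, f b = 0)
    (hμ : ∀ b ≠ a, |f b| ≤ μ) : ∑ b ∈ T.erase a, |f b| ≤ ((T ∩ S).card - 1 : ℝ) * μ := by
  have hsub : (T ∩ S).erase a ⊆ T.erase a :=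
    Finset.erase_subset_erase a Finset.inter_subset_left
  calc ∑ b ∈ T.erase a, |f b| = ∑ b ∈ (T ∩ S).erase a, |f b| := by
        refine (Finset.sum_subset hsub fun b hbT hbTS => ?_).symm
        have hbS : b ∉ S := fun hbS =>
          hbTS (Finset.mem_erase.mpr ⟨Finset.ne_of_mem_erase hbT,
            Finset.mem_inter.mpr ⟨Finset.mem_of_mem_erase hbT, hbS⟩⟩)
        rw [hS b hbS, abs_zero]
    _ ≤ ((T ∩ S).erase a).card • μ :=
        Finset.sum_le_card_nsmul _ _ _ fun b hb => hμ b (Finset.ne_of_mem_erase hb)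
    _ = ((T ∩ S).card - 1 : ℝ) * μ := by
        rw [nsmul_eq_mul, Finset.cast_card_erase_of_mem ha]

theorem IsConvDict.sum_abs_colInner_erase_le {N n m : ℕ} [NeZero N]
    {D : Matrix (ZMod N) (ZMod N × Fin m) ℝ} (hD : IsConvDict N n m D) (hn : 1 ≤ n)
    {T : Finset (ZMod N × Fin m)} {a : ZMod N × Fin m} (ha : a ∈ T) :
    ∑ b ∈ T.erase a, |colInner D a b| ≤
      ((T ∩ stripeSet N n m a.1).card - 1 : ℝ) * mutualCoherence D :=
  sum_abs_erase_le_of_eq_zero_of_notMem (Finset.mem_inter.mpr ⟨ha, mem_stripeSet_self hn a⟩)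
    (fun _ hb => hD.colInner_eq_zero_of_notMem_stripeSet hb)
    (fun _ hb => abs_colInner_le_mutualCoherence hD.2 hb.symm)

theorem gershgorin_conv_gram_general (N n m : ℕ) [NeZero N]
    (hn : 1 ≤ n)
    (D : Matrix (ZMod N) (ZMod N × Fin m) ℝ) (hD : IsConvDict N n m D)
    (T : Finset (ZMod N × Fin m)) (k : ℕ)
    (hk : Finset.univ.sup (fun i : ZMod N => (T ∩ stripeSet N n m i).card) = k)
    (lam : ℝ) (v : {a // a ∈ T} → ℝ) (hv : v ≠ 0)
    (heig : Matrix.mulVec (Matrix.of fun a b : {a // a ∈ T} => colInner D a.1 b.1) v = lam • v) :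
    1 - ((k : ℝ) - 1) * mutualCoherence D ≤ lam ∧
      lam ≤ 1 + ((k : ℝ) - 1) * mutualCoherence D := by
  have hlam : Module.End.HasEigenvalue
      (Matrix.toLin' (Matrix.of fun a b : {a // a ∈ T} => colInner D a.1 b.1)) lam :=
    Module.End.hasEigenvalue_of_hasEigenvector
      ⟨by rwa [Module.End.mem_eigenspace_iff, Matrix.toLin'_apply], hv⟩
  obtain ⟨a, ha⟩ := eigenvalue_mem_ball hlam
  have hstripe : (T ∩ stripeSet N n m a.1.1).card ≤ k :=
    hk ▸ Finset.le_sup (f := fun i => (T ∩ stripeSet N n m i).card) (Finset.mem_univ _)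
  have hrow : ∑ b ∈ T.erase a.1, |colInner D a.1 b| ≤ ((k : ℝ) - 1) * mutualCoherence D :=
    (hD.sum_abs_colInner_erase_le hn a.2).trans <| by
      gcongr
      exact mutualCoherence_nonneg
  rw [Metric.mem_closedBall, Real.dist_eq, Matrix.of_apply, colInner_self hD.2] at ha
  simp only [Matrix.of_apply, Real.norm_eq_abs, Finset.univ_eq_attach,
    Finset.sum_erase_attach (fun b => |colInner D a.1 b|)] at ha
  constructor <;> linarith [abs_le.mp (ha.trans hrow)]

/-- Gershgorin bound for convolutional Gram matrices: if the support `T` has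
`ℓ_{0,∞}` norm `k`, then every eigenvalue of the Gram matrix `D_Tᵀ D_T` lies in
`[1 - (k-1)μ(D), 1 + (k-1)μ(D)]`. -/
theorem gershgorin_conv_gram (N n m : ℕ) [NeZero N]
    (hm : 1 ≤ m) (hn : 1 ≤ n) (hN : 2 * n - 1 ≤ N)
    (D : Matrix (ZMod N) (ZMod N × Fin m) ℝ) (hD : IsConvDict N n m D)
    (T : Finset (ZMod N × Fin m)) (hT : T.Nonempty) (k : ℕ)
    (hk : Finset.univ.sup (fun i : ZMod N => (T ∩ stripeSet N n m i).card) = k)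
    (lam : ℝ) (v : {a // a ∈ T} → ℝ) (hv : v ≠ 0)
    (heig : Matrix.mulVec (Matrix.of fun a b : {a // a ∈ T} => colInner D a.1 b.1) v = lam • v) :
    1 - ((k : ℝ) - 1) * mutualCoherence D ≤ lam ∧
      lam ≤ 1 + ((k : ℝ) - 1) * mutualCoherence D :=
  gershgorin_conv_gram_general N n m hn D hD T k hk lam v hv heig
end
end

section
/- (Lower bound on the Stripe-Spark via the mutual coherence.) Let D be a convolutional dictionary with mutual coherence μ(D) > 0. Then every nonzero Δ ∈ ℝ^{mN} with DΔ = 0 satisfies ‖Δ‖_{0,∞} ≥ 1 + 1/μ(D); equivalently, the Stripe-Spark satisfies σ_∞(D) ≥ 1 + 1/μ(D). -/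
open Finset

noncomputable section

attribute [local instance] Classical.propDecidable

/-- Cauchy–Schwarz: with unit-norm columns, column inner products are bounded by `1`. -/
lemma auxColInner_le_one {N m : ℕ} [NeZero N] (D : Matrix (ZMod N) (ZMod N × Fin m) ℝ)
    (hunit : ∀ a : ZMod N × Fin m, ∑ t, (D t a) ^ 2 = 1) (a b : ZMod N × Fin m) :
    |colInner D a b| ≤ 1 := by
  have h := Finset.sum_mul_sq_le_sq_mul_sq Finset.univ (fun t => D t a) (fun t => D t b)
  rw [hunit a, hunit b] at h
  have hsq : (colInner D a b)^2 ≤ 1 := by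
    have : colInner D a b = ∑ t, D t a * D t b := rfl
    rw [this]; nlinarith [h]
  nlinarith [abs_nonneg (colInner D a b), sq_abs (colInner D a b), hsq]

/-- Locality: two columns with nonvanishing inner product have nearby shift positions. -/
lemma auxColInner_local {N n m : ℕ} [NeZero N]
    (D : Matrix (ZMod N) (ZMod N × Fin m) ℝ)
    (DL : Fin n → Fin m → ℝ)
    (hDL : ∀ (i t : ZMod N) (j : Fin m),
      D t (i, j) = if h : (t - i).val < n then DL ⟨(t - i).val, h⟩ j else 0)
    (a b : ZMod N × Fin m) (h : colInner D a b ≠ 0) :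
    b ∈ stripeSet N n m a.1 := by
  have ht : ∃ t, D t a ≠ 0 ∧ D t b ≠ 0 := by
    by_contra hc
    push_neg at hc
    apply h
    apply Finset.sum_eq_zero
    intro t _
    rcases Classical.em (D t a = 0) with h1 | h1
    · rw [h1]; ring
    · rw [hc t h1]; ring
  obtain ⟨t, hta, htb⟩ := ht
  have hua : (t - a.1).val < n := by
    by_contra hc
    apply hta
    rw [show a = (a.1, a.2) from rfl, hDL a.1 t a.2, dif_neg hc]
  have hub : (t - b.1).val < n := by
    by_contra hc
    apply htb
    rw [show b = (b.1, b.2) from rfl, hDL b.1 t b.2, dif_neg hc]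
  simp only [stripeSet, Finset.mem_filter, Finset.mem_univ, true_and]
  refine ⟨((t - a.1).val : ℤ) - ((t - b.1).val : ℤ), ?_, ?_⟩
  · rw [Finset.mem_Icc]; omega
  · have h1 : (((t - a.1).val : ℕ) : ZMod N) = t - a.1 := ZMod.natCast_rightInverse _
    have h2 : (((t - b.1).val : ℕ) : ZMod N) = t - b.1 := ZMod.natCast_rightInverse _
    push_cast
    rw [h1, h2]
    ring

/-- Lower bound on the Stripe-Spark via the mutual coherence: every nonzero
null-space vector has `ℓ_{0,∞}` norm at least `1 + 1/μ(D)`; equivalently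
`σ_∞(D) ≥ 1 + 1/μ(D)`. -/
theorem stripeSpark_lower_bound (N n m : ℕ) [NeZero N]
    (hm : 1 ≤ m) (hn : 1 ≤ n) (hN : 2 * n - 1 ≤ N)
    (D : Matrix (ZMod N) (ZMod N × Fin m) ℝ) (hD : IsConvDict N n m D)
    (hμ : 0 < mutualCoherence D) :
    (∀ Δ : ZMod N × Fin m → ℝ, Δ ≠ 0 → D.mulVec Δ = 0 →
        1 + 1 / mutualCoherence D ≤ (l0inf N n m Δ : ℝ)) ∧
      (∀ k : ℕ, stripeSpark N n m D = (k : ℕ∞) →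
        1 + 1 / mutualCoherence D ≤ (k : ℝ)) := by
  obtain ⟨⟨DL, hDL⟩, hunit⟩ := hD
  set μ := mutualCoherence D with hμdef
  -- distinct columns have inner product bounded by μ
  have hA : ∀ a b : ZMod N × Fin m, a ≠ b → |colInner D a b| ≤ μ := by
    intro a b hab
    apply le_csSup
    · exact ⟨1, by rintro x ⟨a', b', _, rfl⟩; exact auxColInner_le_one D hunit a' b'⟩
    · exact ⟨a, b, hab, rfl⟩
  have hAA : ∀ a, colInner D a a = 1 := by
    intro a
    have h := hunit a
    rw [← h]
    apply Finset.sum_congr rfl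
    intro t _
    ring
  have part1 : ∀ Δ : ZMod N × Fin m → ℝ, Δ ≠ 0 → D.mulVec Δ = 0 →
      1 + 1 / μ ≤ (l0inf N n m Δ : ℝ) := by
    intro Δ hΔ hker
    have hgram : ∀ a, ∑ b, colInner D a b * Δ b = 0 := by
      intro a
      have heq : ∑ b, colInner D a b * Δ b = ∑ t, D t a * (D.mulVec Δ t) := by
        unfold colInner Matrix.mulVec dotProduct
        simp only [Finset.sum_mul, Finset.mul_sum]
        rw [Finset.sum_comm]
        apply Finset.sum_congr rfl
        intro t _
        apply Finset.sum_congr rfl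
        intro b _
        ring
      rw [heq, hker]
      simp
    haveI : NeZero m := ⟨by omega⟩
    obtain ⟨a, -, hmax⟩ := Finset.exists_max_image (Finset.univ : Finset (ZMod N × Fin m))
      (fun b => |Δ b|) Finset.univ_nonempty
    simp only [Finset.mem_univ, forall_const] at hmax
    have hΔa : Δ a ≠ 0 := by
      obtain ⟨b, hb⟩ := Function.ne_iff.mp hΔ
      intro h0
      have hb' := hmax b
      rw [h0, abs_zero] at hb'
      exact hb (abs_eq_zero.mp (le_antisymm hb' (abs_nonneg _)))
    set F := (stripeSet N n m a.1).filter (fun b => Δ b ≠ 0) with hF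
    have haS : a ∈ stripeSet N n m a.1 := by
      simp only [stripeSet, Finset.mem_filter, Finset.mem_univ, true_and]
      exact ⟨0, by rw [Finset.mem_Icc]; omega, by simp⟩
    have haF : a ∈ F := by rw [hF, Finset.mem_filter]; exact ⟨haS, hΔa⟩
    have hcard : 1 ≤ F.card := Finset.card_pos.mpr ⟨a, haF⟩
    have key : |Δ a| ≤ ((F.card : ℝ) - 1) * (μ * |Δ a|) := by
      have h1 : Δ a = -∑ b ∈ Finset.univ.erase a, colInner D a b * Δ b := by
        have h2 := Finset.sum_erase_add Finset.univ
          (fun b => colInner D a b * Δ b) (Finset.mem_univ a)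
        simp only [hgram a, hAA a, one_mul] at h2
        linarith [h2]
      calc |Δ a| = |∑ b ∈ Finset.univ.erase a, colInner D a b * Δ b| := by
              rw [h1, abs_neg]
        _ ≤ ∑ b ∈ Finset.univ.erase a, |colInner D a b * Δ b| :=
              Finset.abs_sum_le_sum_abs _ _
        _ = ∑ b ∈ F.erase a, |colInner D a b * Δ b| := by
              symm
              apply Finset.sum_subset
              · intro b hb
                exact Finset.mem_erase.mpr ⟨(Finset.mem_erase.mp hb).1, Finset.mem_univ b⟩
              · intro b hb hbn
                rcases Classical.em (Δ b = 0) with h0 | h0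
                · rw [h0, mul_zero, abs_zero]
                · have hcol : colInner D a b = 0 := by
                    by_contra hc
                    apply hbn
                    refine Finset.mem_erase.mpr ⟨(Finset.mem_erase.mp hb).1, ?_⟩
                    rw [hF, Finset.mem_filter]
                    exact ⟨auxColInner_local D DL hDL a b hc, h0⟩
                  rw [hcol, zero_mul, abs_zero]
        _ ≤ ∑ _b ∈ F.erase a, μ * |Δ a| := by
              apply Finset.sum_le_sum
              intro b hb
              rw [abs_mul]
              have hba : a ≠ b := fun h => (Finset.mem_erase.mp hb).1 h.symm
              exact mul_le_mul (hA a b hba) (hmax b) (abs_nonneg _) (le_of_lt hμ)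
        _ = ((F.erase a).card : ℝ) * (μ * |Δ a|) := by
              rw [Finset.sum_const, nsmul_eq_mul]
        _ = ((F.card : ℝ) - 1) * (μ * |Δ a|) := by
              rw [Finset.card_erase_of_mem haF, Nat.cast_sub hcard, Nat.cast_one]
    have habs : 0 < |Δ a| := abs_pos.mpr hΔa
    have h3 : 1 ≤ ((F.card : ℝ) - 1) * μ := by nlinarith [key, habs]
    have h4 : 1 / μ ≤ (F.card : ℝ) - 1 := by
      rw [div_le_iff₀ hμ]; linarith
    have h6 : F.card = stripeNnz N n m Δ a.1 := rfl
    have h7 : stripeNnz N n m Δ a.1 ≤ l0inf N n m Δ :=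
      Finset.le_sup (Finset.mem_univ a.1)
    have h8 : (F.card : ℝ) ≤ (l0inf N n m Δ : ℝ) := by
      exact_mod_cast h6 ▸ h7
    linarith
  refine ⟨part1, ?_⟩
  intro k hk
  set c := Nat.ceil (1 + 1 / μ) with hc
  have hlb : ∀ x ∈ {k : ℕ∞ | ∃ Δ : ZMod N × Fin m → ℝ,
      Δ ≠ 0 ∧ D.mulVec Δ = 0 ∧ (l0inf N n m Δ : ℕ∞) = k}, (c : ℕ∞) ≤ x := by
    rintro x ⟨Δ, hΔ, hker, rfl⟩
    have h1 := part1 Δ hΔ hker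
    have h2 : c ≤ l0inf N n m Δ := Nat.ceil_le.mpr h1
    exact_mod_cast h2
  have h3 : (c : ℕ∞) ≤ stripeSpark N n m D := le_sInf hlb
  rw [hk] at h3
  have h4 : c ≤ k := by exact_mod_cast h3
  calc 1 + 1 / μ ≤ (c : ℝ) := Nat.le_ceil _
    _ ≤ (k : ℝ) := Nat.cast_le.mpr h4


end
end

section
/- (Support-weighted null-space inequality from the BP proof.) Let D be a convolutional dictionary with mutual coherence μ = μ(D), let Δ ∈ ℝ^{mN} satisfy DΔ = 0, and let Γ ∈ ℝ^{mN} with support 𝒯. Then Σ_{a∈𝒯} |Δ_a| ≤ (μ/(μ+1)) · ‖Δ‖_1 · ‖Γ‖_{0,∞}, where ‖Δ‖_1 is the ℓ1 norm of Δ. -/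
open Finset

noncomputable section

attribute [local instance] Classical.propDecidable

/-- Support-weighted null-space inequality from the BP proof: if `DΔ = 0`, then
the `ℓ1` mass of `Δ` on the support of `Γ` is at most `(μ/(μ+1)) · ‖Δ‖₁ · ‖Γ‖_{0,∞}`. -/
theorem nullspace_support_bound (N n m : ℕ) [NeZero N]
    (hm : 1 ≤ m) (hn : 1 ≤ n) (hN : 2 * n - 1 ≤ N)
    (D : Matrix (ZMod N) (ZMod N × Fin m) ℝ) (hD : IsConvDict N n m D)
    (Δ : ZMod N × Fin m → ℝ) (hΔ : D.mulVec Δ = 0)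
    (Γ : ZMod N × Fin m → ℝ) :
    ∑ a ∈ Finset.univ.filter (fun a => Γ a ≠ 0), |Δ a| ≤
      (mutualCoherence D / (mutualCoherence D + 1)) * l1norm Δ * (l0inf N n m Γ : ℝ) := by
  classical
  set μ := mutualCoherence D with hμdef
  set L : ℝ := (l0inf N n m Γ : ℝ) with hLdef
  set S : Finset (ZMod N × Fin m) := Finset.univ.filter (fun a => Γ a ≠ 0) with hSdef
  set G : (ZMod N × Fin m) → (ZMod N × Fin m) → ℝ := fun a b => colInner D a b with hGdef
  -- Gram relation
  have hGram : ∀ a, ∑ b, G a b * Δ b = 0 := by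
    intro a
    have h1 : ∑ b, G a b * Δ b = ∑ t, D t a * (D.mulVec Δ t) := by
      simp only [hGdef, colInner, Matrix.mulVec, dotProduct, Finset.sum_mul,
        Finset.mul_sum]
      rw [Finset.sum_comm]
      exact Finset.sum_congr rfl fun _ _ => Finset.sum_congr rfl fun _ _ => by ring
    rw [h1, hΔ]
    simp
  have hGaa : ∀ a, G a a = 1 := by
    intro a
    have := hD.2 a
    simpa [hGdef, colInner, pow_two] using this
  -- boundedness and nonnegativity of μ
  have hbdd : BddAbove {x | ∃ a b : ZMod N × Fin m, a ≠ b ∧ x = |colInner D a b|} := by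
    apply Set.Finite.bddAbove
    apply Set.Finite.subset (Set.finite_range
      (fun p : (ZMod N × Fin m) × (ZMod N × Fin m) => |colInner D p.1 p.2|))
    rintro x ⟨a, b, -, rfl⟩
    exact ⟨(a, b), rfl⟩
  have hμ0 : 0 ≤ μ := by
    apply Real.sSup_nonneg
    rintro x ⟨a, b, -, rfl⟩
    exact abs_nonneg _
  have hμle : ∀ a b : ZMod N × Fin m, a ≠ b → |G a b| ≤ μ := by
    intro a b hab
    exact le_csSup hbdd ⟨a, b, hab, rfl⟩
  -- vanishing of the Gram off the stripe
  have hGzero : ∀ a b : ZMod N × Fin m, a ∉ stripeSet N n m b.1 → G a b = 0 := by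
    intro a b hab
    obtain ⟨DL, hDL⟩ := hD.1
    apply Finset.sum_eq_zero
    intro t _
    by_contra h
    have h1 : D t a ≠ 0 := fun h' => h (by rw [h']; ring)
    have h2 : D t b ≠ 0 := fun h' => h (by rw [h']; ring)
    have ha : (t - a.1).val < n := by
      by_contra hc
      apply h1
      rw [show a = (a.1, a.2) from rfl, hDL]
      simp [hc]
    have hb : (t - b.1).val < n := by
      by_contra hc
      apply h2
      rw [show b = (b.1, b.2) from rfl, hDL]
      simp [hc]
    apply hab
    simp only [stripeSet, Finset.mem_filter, Finset.mem_univ, true_and]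
    refine ⟨((t - b.1).val : ℤ) - ((t - a.1).val : ℤ), ?_, ?_⟩
    · rw [Finset.mem_Icc]
      omega
    · push_cast
      rw [ZMod.natCast_val, ZMod.natCast_val, ZMod.cast_id, ZMod.cast_id]
      ring
  -- membership of b in its own stripe
  have hself : ∀ b : ZMod N × Fin m, b ∈ stripeSet N n m b.1 := by
    intro b
    simp only [stripeSet, Finset.mem_filter, Finset.mem_univ, true_and]
    refine ⟨0, ?_, by simp⟩
    rw [Finset.mem_Icc]
    omega
  -- pointwise bound
  have hpt : ∀ a : ZMod N × Fin m, |Δ a| ≤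
      ∑ b, (if a ∈ (stripeSet N n m b.1).erase b then μ * |Δ b| else 0) := by
    intro a
    have hsplit : G a a * Δ a + ∑ b ∈ Finset.univ.erase a, G a b * Δ b = 0 := by
      have h0 := Finset.add_sum_erase Finset.univ (fun b => G a b * Δ b) (Finset.mem_univ a)
      rw [h0, hGram a]
    have hda : Δ a = -∑ b ∈ Finset.univ.erase a, G a b * Δ b := by
      rw [hGaa a] at hsplit; linarith
    have h1 : |Δ a| ≤ ∑ b ∈ Finset.univ.erase a, |G a b| * |Δ b| := by
      rw [hda, abs_neg]
      refine le_trans (Finset.abs_sum_le_sum_abs _ _) ?_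
      apply Finset.sum_le_sum
      intro b _
      rw [abs_mul]
    refine le_trans h1 ?_
    rw [← Finset.add_sum_erase _ (fun b => if a ∈ (stripeSet N n m b.1).erase b
        then μ * |Δ b| else 0) (Finset.mem_univ a)]
    have haa : a ∉ (stripeSet N n m a.1).erase a := fun hc => (Finset.mem_erase.1 hc).1 rfl
    rw [if_neg haa, zero_add]
    apply Finset.sum_le_sum
    intro b hb
    have hab : a ≠ b := (Finset.mem_erase.1 hb).1.symm
    by_cases hmem : a ∈ stripeSet N n m b.1
    · rw [if_pos (Finset.mem_erase.2 ⟨hab, hmem⟩)]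
      exact mul_le_mul_of_nonneg_right (hμle a b hab) (abs_nonneg _)
    · rw [hGzero a b hmem, if_neg (fun hc => hmem (Finset.mem_erase.1 hc).2)]
      simp
  -- cardinality bound
  have hcard : ∀ b : ZMod N × Fin m,
      ((S ∩ (stripeSet N n m b.1).erase b).card : ℝ) ≤ L - (if b ∈ S then 1 else 0) := by
    intro b
    have hEq : S ∩ stripeSet N n m b.1 = (stripeSet N n m b.1).filter (fun a => Γ a ≠ 0) := by
      ext a
      simp only [hSdef, Finset.mem_inter, Finset.mem_filter, Finset.mem_univ, true_and]
      tauto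
    have hle : (S ∩ stripeSet N n m b.1).card ≤ l0inf N n m Γ := by
      rw [hEq]
      exact Finset.le_sup (f := fun i => stripeNnz N n m Γ i) (Finset.mem_univ b.1)
    have hEq2 : S ∩ (stripeSet N n m b.1).erase b = (S ∩ stripeSet N n m b.1).erase b := by
      ext a
      simp only [Finset.mem_inter, Finset.mem_erase]
      tauto
    rw [hEq2]
    by_cases hbS : b ∈ S
    · rw [if_pos hbS]
      have hbmem : b ∈ S ∩ stripeSet N n m b.1 := Finset.mem_inter.2 ⟨hbS, hself b⟩
      have hc1 : ((S ∩ stripeSet N n m b.1).erase b).card + 1 = (S ∩ stripeSet N n m b.1).card :=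
        Finset.card_erase_add_one hbmem
      have : ((S ∩ stripeSet N n m b.1).erase b).card + 1 ≤ l0inf N n m Γ := by omega
      have := (Nat.cast_le (α := ℝ)).2 this
      rw [hLdef]
      push_cast at this ⊢
      linarith
    · rw [if_neg hbS, sub_zero]
      have : ((S ∩ stripeSet N n m b.1).erase b).card ≤ l0inf N n m Γ :=
        le_trans (Finset.card_le_card (Finset.erase_subset _ _)) hle
      rw [hLdef]
      exact_mod_cast this
  -- main chain
  set X : ℝ := ∑ a ∈ S, |Δ a| with hXdef
  have hmain : X ≤ μ * L * l1norm Δ - μ * X := by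
    have step1 : X ≤ ∑ a ∈ S, ∑ b,
        (if a ∈ (stripeSet N n m b.1).erase b then μ * |Δ b| else 0) :=
      Finset.sum_le_sum (fun a _ => hpt a)
    have step2 : ∑ a ∈ S, ∑ b, (if a ∈ (stripeSet N n m b.1).erase b then μ * |Δ b| else 0)
        = ∑ b, ((S ∩ (stripeSet N n m b.1).erase b).card : ℝ) * (μ * |Δ b|) := by
      rw [Finset.sum_comm]
      apply Finset.sum_congr rfl
      intro b _
      rw [Finset.sum_ite_mem, Finset.sum_const, nsmul_eq_mul]
    have step3 : ∑ b, ((S ∩ (stripeSet N n m b.1).erase b).card : ℝ) * (μ * |Δ b|)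
        ≤ ∑ b : ZMod N × Fin m, (L - (if b ∈ S then 1 else 0)) * (μ * |Δ b|) := by
      apply Finset.sum_le_sum
      intro b _
      apply mul_le_mul_of_nonneg_right (hcard b)
      exact mul_nonneg hμ0 (abs_nonneg _)
    have step4 : ∑ b : ZMod N × Fin m, (L - (if b ∈ S then 1 else 0)) * (μ * |Δ b|)
        = μ * L * l1norm Δ - μ * X := by
      have hXalt : X = ∑ b : ZMod N × Fin m, (if b ∈ S then 1 else 0) * |Δ b| := by
        rw [hXdef, hSdef, Finset.sum_filter]
        apply Finset.sum_congr rfl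
        intro b _
        by_cases h : Γ b = 0 <;> simp [hSdef, h]
      simp only [l1norm]
      rw [hXalt, Finset.mul_sum, Finset.mul_sum, ← Finset.sum_sub_distrib]
      apply Finset.sum_congr rfl
      intro b _
      ring
    calc X ≤ _ := step1
    _ = _ := step2
    _ ≤ _ := step3
    _ = _ := step4
  -- conclude
  have hμ1 : (0:ℝ) < μ + 1 := by linarith
  rw [div_mul_eq_mul_div, div_mul_eq_mul_div, le_div_iff₀ hμ1]
  nlinarith [hmain]

end
end
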